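/- Fix finite sets X_f, Y_f, X_g, Y_g, finite output sets Z_f, Z_g, sets S_f ⊆ X_f × Y_f and S_g ⊆ X_g × Y_g, functions f : S_f → Z_f and g : S_g → Z_g, and ε ∈ [0,1]. Suppose there are maps u_A, v_A : X_g → X_f, u_B, v_B : Y_g → Y_f and c : Z_f × Z_f → Z_g such that for every (x,y) ∈ S_g, both (u_A(x), u_B(y)) and (v_A(x), v_B(y)) lie in S_f and c(f(u_A(x), u_B(y)), f(v_A(x), v_B(y))) = g(x,y). Then for every family w of nonnegative reals that is (ε/2)-feasible for the relaxed partition bound of f, the family w'' defined by w''_{R'',z} := ∑ w_{R₁,z₁}·w_{R₂,z₂}, the sum over all pairs ((R₁,z₁),(R₂,z₂)) with c(z₁,z₂) = z and {(x,y) : (u_A(x),u_B(y)) ∈ R₁ and (v_A(x),v_B(y)) ∈ R₂} = R'', is ε-feasible for the relaxed partition bound of g and satisfies ∑_{R'',z} w''_{R'',z} = (∑_{R,z} w_{R,z})². Consequently bprt_ε(g) ≤ (bprt_{ε/2}(f))². -/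

import Mathlib

open Finset

/-- Membership of an input pair in a rectangle (encoded as a pair of finsets). -/
def MemRect {X Y : Type*} (p : X × Y) (R : Finset X × Finset Y) : Prop :=
  p.1 ∈ R.1 ∧ p.2 ∈ R.2

instance {X Y : Type*} [DecidableEq X] [DecidableEq Y] (p : X × Y) (R : Finset X × Finset Y) :
    Decidable (MemRect p R) := by unfold MemRect; infer_instance

/-- `∑_{R ∋ p} w_{R,z}`. -/
noncomputable def coverSum {X Y Z : Type*} [Fintype X] [Fintype Y]
    [DecidableEq X] [DecidableEq Y]
    (w : Finset X × Finset Y → Z → ℝ) (p : X × Y) (z : Z) : ℝ :=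
  ∑ R ∈ univ.filter (fun R => MemRect p R), w R z

/-- A family `w` is `ε`-feasible for the relaxed partition bound of `f` (valid inputs `S`). -/
def RelaxedFeasible {X Y Z : Type*} [Fintype X] [Fintype Y] [Fintype Z]
    [DecidableEq X] [DecidableEq Y]
    (S : Finset (X × Y)) (f : X × Y → Z) (ε : ℝ)
    (w : Finset X × Finset Y → Z → ℝ) : Prop :=
  (∀ R z, 0 ≤ w R z) ∧
  (∀ p ∈ S, 1 - ε ≤ coverSum w p (f p)) ∧
  (∀ p ∉ S, 1 - ε ≤ ∑ z, coverSum w p z) ∧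
  (∀ p : X × Y, ∑ z, coverSum w p z ≤ 1)

/-- The objective value `∑_{R,z} w_{R,z}`. -/
noncomputable def totalWeight {X Y Z : Type*} [Fintype X] [Fintype Y] [Fintype Z]
    [DecidableEq X] [DecidableEq Y]
    (w : Finset X × Finset Y → Z → ℝ) : ℝ :=
  ∑ R : Finset X × Finset Y, ∑ z : Z, w R z

/-- The relaxed partition bound `bprt_ε(f)`. -/
noncomputable def bprt {X Y Z : Type*} [Fintype X] [Fintype Y] [Fintype Z]
    [DecidableEq X] [DecidableEq Y]
    (S : Finset (X × Y)) (f : X × Y → Z) (ε : ℝ) : ℝ :=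
  sInf {v : ℝ | ∃ w : Finset X × Finset Y → Z → ℝ,
    RelaxedFeasible S f ε w ∧ v = totalWeight w}

/-! The preimage of a pair of rectangles `R₁, R₂` of `f` under the reduction is a rectangle of `g`,
containing `p` exactly when `R₁` contains the first image of `p` and `R₂` the second. So the
coverage of `p` by the product family, summed over the outputs that `c` combines into `z`,
factors into coverages for `f`, and the objective value squares. The constraints at `ε / 2` then
multiply into those at `ε` because `(1 - ε / 2)² ≥ 1 - ε`, and passing to infima gives
`bprt_ε(g) ≤ bprt_{ε/2}(f)²`. -/

theorem coverSum_nonneg {X Y Z : Type*} [Fintype X] [Fintype Y] [DecidableEq X] [DecidableEq Y]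
    {w : Finset X × Finset Y → Z → ℝ} (hw : ∀ R z, 0 ≤ w R z) (p : X × Y) (z : Z) :
    0 ≤ coverSum w p z :=
  sum_nonneg fun R _ => hw R z

theorem one_sub_le_mul_of_one_sub_half_le {ε a b : ℝ} (hε : ε ≤ 2) (ha : 1 - ε / 2 ≤ a)
    (hb : 1 - ε / 2 ≤ b) : 1 - ε ≤ a * b := by
  have ht : 0 ≤ 1 - ε / 2 := by linarith
  nlinarith [mul_nonneg (sub_nonneg.2 ha) (sub_nonneg.2 hb), mul_nonneg ht (sub_nonneg.2 ha),
    mul_nonneg ht (sub_nonneg.2 hb), sq_nonneg ε]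

section Feasible

variable {X Y Z : Type*} [Fintype X] [Fintype Y] [Fintype Z] [DecidableEq X] [DecidableEq Y]
  {S : Finset (X × Y)} {f : X × Y → Z} {ε : ℝ} {w : Finset X × Finset Y → Z → ℝ}

theorem RelaxedFeasible.one_sub_le_sum_coverSum (hw : RelaxedFeasible S f ε w) (p : X × Y) :
    1 - ε ≤ ∑ z, coverSum w p z := by
  by_cases hp : p ∈ S
  · exact (hw.2.1 p hp).trans
      (single_le_sum (fun z _ => coverSum_nonneg hw.1 p z) (mem_univ (f p)))
  · exact hw.2.2.1 p hp

theorem totalWeight_nonneg (hw : ∀ R z, 0 ≤ w R z) : 0 ≤ totalWeight w :=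
  sum_nonneg fun R _ => sum_nonneg fun z _ => hw R z

theorem bprt_nonneg : 0 ≤ bprt S f ε :=
  Real.sInf_nonneg <| by rintro _ ⟨w, hw, rfl⟩; exact totalWeight_nonneg hw.1

theorem bprt_le_totalWeight (hw : RelaxedFeasible S f ε w) : bprt S f ε ≤ totalWeight w :=
  csInf_le ⟨0, by rintro _ ⟨w, hw, rfl⟩; exact totalWeight_nonneg hw.1⟩ ⟨w, hw, rfl⟩

theorem le_bprt {a : ℝ} (hw : RelaxedFeasible S f ε w)
    (h : ∀ w', RelaxedFeasible S f ε w' → a ≤ totalWeight w') : a ≤ bprt S f ε :=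
  le_csInf ⟨_, w, hw, rfl⟩ <| by rintro _ ⟨w', hw', rfl⟩; exact h w' hw'

end Feasible

theorem bprt_le_sq_bprt {Xf Yf Zf Xg Yg Zg : Type*}
    [Fintype Xf] [Fintype Yf] [Fintype Zf] [Fintype Xg] [Fintype Yg] [Fintype Zg]
    [DecidableEq Xf] [DecidableEq Yf] [DecidableEq Xg] [DecidableEq Yg]
    {Sf : Finset (Xf × Yf)} {Sg : Finset (Xg × Yg)} {f : Xf × Yf → Zf} {g : Xg × Yg → Zg}
    {ε₁ ε₂ : ℝ} {w : Finset Xf × Finset Yf → Zf → ℝ} (hw : RelaxedFeasible Sf f ε₁ w)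
    (h : ∀ w, RelaxedFeasible Sf f ε₁ w →
      ∃ w', RelaxedFeasible Sg g ε₂ w' ∧ totalWeight w' ≤ totalWeight w ^ 2) :
    bprt Sg g ε₂ ≤ bprt Sf f ε₁ ^ 2 := by
  have hsqrt : √(bprt Sg g ε₂) ≤ bprt Sf f ε₁ := le_bprt hw fun w hw => by
    obtain ⟨w', hw', hle⟩ := h w hw
    exact (Real.sqrt_le_left (totalWeight_nonneg hw.1)).2 ((bprt_le_totalWeight hw').trans hle)
  calc bprt Sg g ε₂ = √(bprt Sg g ε₂) ^ 2 := (Real.sq_sqrt bprt_nonneg).symm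
    _ ≤ bprt Sf f ε₁ ^ 2 := pow_le_pow_left₀ (Real.sqrt_nonneg _) hsqrt 2

section Product

variable {Xf Yf Zf Xg Yg Zg : Type*} [Fintype Xg] [Fintype Yg] [DecidableEq Xf] [DecidableEq Yf]
  (uA vA : Xg → Xf) (uB vB : Yg → Yf)

def pullbackRect (R₁ R₂ : Finset Xf × Finset Yf) : Finset Xg × Finset Yg :=
  (univ.filter fun x => uA x ∈ R₁.1 ∧ vA x ∈ R₂.1,
   univ.filter fun y => uB y ∈ R₁.2 ∧ vB y ∈ R₂.2)

theorem memRect_pullbackRect {p : Xg × Yg} {R₁ R₂ : Finset Xf × Finset Yf} :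
    MemRect p (pullbackRect uA vA uB vB R₁ R₂) ↔
      MemRect (uA p.1, uB p.2) R₁ ∧ MemRect (vA p.1, vB p.2) R₂ := by
  simp only [MemRect, pullbackRect, mem_filter, mem_univ, true_and]
  tauto

variable [Fintype Xf] [Fintype Yf] [Fintype Zf]
  [DecidableEq Xg] [DecidableEq Yg] [DecidableEq Zg] (c : Zf × Zf → Zg)

noncomputable def productFamily (w : Finset Xf × Finset Yf → Zf → ℝ)
    (R : Finset Xg × Finset Yg) (z : Zg) : ℝ :=
  ∑ R₁ : Finset Xf × Finset Yf, ∑ z₁ : Zf, ∑ R₂ : Finset Xf × Finset Yf, ∑ z₂ : Zf,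
    if c (z₁, z₂) = z ∧ pullbackRect uA vA uB vB R₁ R₂ = R then w R₁ z₁ * w R₂ z₂ else 0

theorem productFamily_nonneg {w : Finset Xf × Finset Yf → Zf → ℝ} (hw : ∀ R z, 0 ≤ w R z)
    (R : Finset Xg × Finset Yg) (z : Zg) : 0 ≤ productFamily uA vA uB vB c w R z :=
  sum_nonneg fun _ _ => sum_nonneg fun _ _ => sum_nonneg fun _ _ => sum_nonneg fun _ _ =>
    by split_ifs; exacts [mul_nonneg (hw _ _) (hw _ _), le_rfl]

variable [Fintype Zg]

theorem sum_mul_productFamily (w : Finset Xf × Finset Yf → Zf → ℝ)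
    (F : Finset Xg × Finset Yg → Zg → ℝ) :
    ∑ R, ∑ z, F R z * productFamily uA vA uB vB c w R z =
      ∑ R₁ : Finset Xf × Finset Yf, ∑ z₁ : Zf, ∑ R₂ : Finset Xf × Finset Yf, ∑ z₂ : Zf,
        F (pullbackRect uA vA uB vB R₁ R₂) (c (z₁, z₂)) * (w R₁ z₁ * w R₂ z₂) := by
  simp only [productFamily, mul_sum, mul_ite, mul_zero]
  simp_rw [sum_comm (s := (univ : Finset (Finset Xg × Finset Yg))),
    sum_comm (s := (univ : Finset Zg))]
  simp [ite_and]

theorem coverSum_productFamily (w : Finset Xf × Finset Yf → Zf → ℝ) (p : Xg × Yg) (z : Zg) :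
    coverSum (productFamily uA vA uB vB c w) p z =
      ∑ z₁, ∑ z₂, if c (z₁, z₂) = z then
        coverSum w (uA p.1, uB p.2) z₁ * coverSum w (vA p.1, vB p.2) z₂ else 0 := by
  have h : coverSum (productFamily uA vA uB vB c w) p z =
      ∑ R, ∑ z', (if MemRect p R ∧ z' = z then 1 else 0) * productFamily uA vA uB vB c w R z' := by
    simp [coverSum, sum_filter, ite_and]
  rw [h, sum_mul_productFamily]
  simp_rw [sum_comm (s := (univ : Finset (Finset Xf × Finset Yf))) (t := (univ : Finset Zf))]
  refine sum_congr rfl fun z₁ _ => sum_congr rfl fun z₂ _ => ?_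
  by_cases hc : c (z₁, z₂) = z <;>
    simp [hc, memRect_pullbackRect, coverSum, sum_filter, sum_mul_sum, ← ite_and, and_comm]

theorem sum_coverSum_productFamily (w : Finset Xf × Finset Yf → Zf → ℝ) (p : Xg × Yg) :
    ∑ z, coverSum (productFamily uA vA uB vB c w) p z =
      (∑ z, coverSum w (uA p.1, uB p.2) z) * ∑ z, coverSum w (vA p.1, vB p.2) z := by
  simp_rw [coverSum_productFamily, sum_comm (s := (univ : Finset Zg)), sum_ite_eq,
    sum_mul_sum, if_pos (mem_univ _)]

theorem mul_coverSum_le_coverSum_productFamily {w : Finset Xf × Finset Yf → Zf → ℝ}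
    (hw : ∀ R z, 0 ≤ w R z) (p : Xg × Yg) (z₁ z₂ : Zf) :
    coverSum w (uA p.1, uB p.2) z₁ * coverSum w (vA p.1, vB p.2) z₂ ≤
      coverSum (productFamily uA vA uB vB c w) p (c (z₁, z₂)) := by
  rw [coverSum_productFamily, ← Fintype.sum_prod_type']
  refine le_trans (le_of_eq ?_) (single_le_sum (fun q _ => ?_) (mem_univ (z₁, z₂)))
  · exact (if_pos rfl).symm
  split_ifs
  exacts [mul_nonneg (coverSum_nonneg hw _ _) (coverSum_nonneg hw _ _), le_rfl]

theorem totalWeight_productFamily (w : Finset Xf × Finset Yf → Zf → ℝ) :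
    totalWeight (productFamily uA vA uB vB c w) = totalWeight w ^ 2 := by
  have h := sum_mul_productFamily uA vA uB vB c w fun _ _ => 1
  simp only [one_mul] at h
  rw [totalWeight, h, totalWeight, sq]
  simp_rw [sum_mul, mul_sum]

variable {uA vA uB vB c}

theorem RelaxedFeasible.productFamily {Sf : Finset (Xf × Yf)} {Sg : Finset (Xg × Yg)}
    {f : Xf × Yf → Zf} {g : Xg × Yg → Zg} {ε : ℝ} {w : Finset Xf × Finset Yf → Zf → ℝ}
    (hε : ε ≤ 2)
    (hred : ∀ p ∈ Sg, (uA p.1, uB p.2) ∈ Sf ∧ (vA p.1, vB p.2) ∈ Sf ∧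
      c (f (uA p.1, uB p.2), f (vA p.1, vB p.2)) = g p)
    (hw : RelaxedFeasible Sf f (ε / 2) w) :
    RelaxedFeasible Sg g ε (productFamily uA vA uB vB c w) := by
  refine ⟨productFamily_nonneg _ _ _ _ _ hw.1, fun p hp => ?_, fun p _ => ?_, fun p => ?_⟩
  · obtain ⟨hu, hv, hc⟩ := hred p hp
    rw [← hc]
    exact (one_sub_le_mul_of_one_sub_half_le hε (hw.2.1 _ hu) (hw.2.1 _ hv)).trans
      (mul_coverSum_le_coverSum_productFamily _ _ _ _ _ hw.1 p _ _)
  · rw [sum_coverSum_productFamily]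
    exact one_sub_le_mul_of_one_sub_half_le hε
      (hw.one_sub_le_sum_coverSum _) (hw.one_sub_le_sum_coverSum _)
  · rw [sum_coverSum_productFamily]
    exact mul_le_one₀ (hw.2.2.2 _) (sum_nonneg fun z _ => coverSum_nonneg hw.1 _ z) (hw.2.2.2 _)

end Product

/-- If `g` reduces to two instances of `f` (via input maps
`u_A, v_A, u_B, v_B` and output combiner `c`), then squaring an `(ε/2)`-feasible family
for `f` yields an `ε`-feasible family for `g` of squared objective value; consequently
`bprt_ε(g) ≤ (bprt_{ε/2}(f))²`. -/
theorem statement_14 {Xf Yf Zf Xg Yg Zg : Type*}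
    [Fintype Xf] [Fintype Yf] [Fintype Zf] [Fintype Xg] [Fintype Yg] [Fintype Zg]
    [DecidableEq Xf] [DecidableEq Yf] [DecidableEq Xg] [DecidableEq Yg] [DecidableEq Zg]
    (Sf : Finset (Xf × Yf)) (Sg : Finset (Xg × Yg))
    (f : Xf × Yf → Zf) (g : Xg × Yg → Zg)
    (ε : ℝ) (hε : ε ∈ Set.Icc (0 : ℝ) 1)
    (uA vA : Xg → Xf) (uB vB : Yg → Yf) (c : Zf × Zf → Zg)
    (hred : ∀ p ∈ Sg, (uA p.1, uB p.2) ∈ Sf ∧ (vA p.1, vB p.2) ∈ Sf ∧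
      c (f (uA p.1, uB p.2), f (vA p.1, vB p.2)) = g p)
    (w : Finset Xf × Finset Yf → Zf → ℝ)
    (hw : RelaxedFeasible Sf f (ε / 2) w)
    (w'' : Finset Xg × Finset Yg → Zg → ℝ)
    (hw'' : ∀ (R'' : Finset Xg × Finset Yg) (z : Zg), w'' R'' z =
      ∑ R₁ : Finset Xf × Finset Yf, ∑ z₁ : Zf, ∑ R₂ : Finset Xf × Finset Yf, ∑ z₂ : Zf,
        if c (z₁, z₂) = z ∧
            (univ.filter (fun x : Xg => uA x ∈ R₁.1 ∧ vA x ∈ R₂.1),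
             univ.filter (fun y : Yg => uB y ∈ R₁.2 ∧ vB y ∈ R₂.2)) = R''
        then w R₁ z₁ * w R₂ z₂ else 0) :
    RelaxedFeasible Sg g ε w'' ∧
    totalWeight w'' = (totalWeight w) ^ 2 ∧
    bprt Sg g ε ≤ (bprt Sf f (ε / 2)) ^ 2 := by
  obtain rfl : w'' = productFamily uA vA uB vB c w := funext₂ hw''
  have hε₂ : ε ≤ 2 := by linarith [hε.2]
  refine ⟨hw.productFamily hε₂ hred, totalWeight_productFamily uA vA uB vB c w, ?_⟩
  exact bprt_le_sq_bprt hw fun w₀ hw₀ => ⟨_, hw₀.productFamily hε₂ hred,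
    (totalWeight_productFamily uA vA uB vB c w₀).le⟩
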